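/- Let Λ be an l×l generator matrix (off-diagonal entries nonnegative, row sums zero) and ℓ ∈ ℝ^l with all entries nonnegative. Define γ(t) = exp(t(Λ − D(ℓ)))·𝟏. Then for all t ≥ 0 and all i, γ_i(t) ≥ e^{(Λ_{ii} − ℓ_i) t} > 0; in particular γ_i(t) > 0. -/

import Mathlib

/-!
A matrix with nonnegative entries has an entrywise nonnegative exponential whose diagonal
dominates `exp` of its diagonal, by comparing the power series term by term. A matrix `A` with
nonnegative off-diagonal entries becomes entrywise nonnegative after adding `c • 1` for large `c`,
and since `c • 1` is central, `exp A = e^{-c} exp (A + c • 1)`, so both properties transfer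
to `A`. For `A = t (Λ - D(ℓ))` the row sums of `exp A` are then at least `exp (A i i)`.
-/

open Matrix NormedSpace
open scoped Nat

namespace Matrix

variable {ι : Type*} [Fintype ι] [DecidableEq ι]

-- Only to make the power series lemmas available; `exp` does not depend on the chosen norm.
attribute [local instance] Matrix.linftyOpNormedRing Matrix.linftyOpNormedAlgebra

theorem apply_self_pow_le_pow_apply_self {A : Matrix ι ι ℝ} (hA : ∀ i j, 0 ≤ A i j) (i : ι)
    (k : ℕ) : A i i ^ k ≤ (A ^ k) i i := by
  induction k with
  | zero => simp
  | succ k ih =>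
    rw [pow_succ, pow_succ, mul_apply]
    calc A i i ^ k * A i i ≤ (A ^ k) i i * A i i := by gcongr; exact hA i i
      _ ≤ ∑ j, (A ^ k) i j * A j i :=
        Finset.single_le_sum (f := fun j => (A ^ k) i j * A j i)
          (fun j _ => mul_nonneg (pow_apply_nonneg hA k i j) (hA j i)) (Finset.mem_univ i)

theorem hasSum_exp_apply (A : Matrix ι ι ℝ) (i j : ι) :
    HasSum (fun n : ℕ => (n ! : ℝ)⁻¹ * (A ^ n) i j) (exp A i j) :=
  Pi.hasSum.mp (Pi.hasSum.mp (exp_series_hasSum_exp' (𝕂 := ℝ) A) i) j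

theorem exp_apply_nonneg {A : Matrix ι ι ℝ} (hA : ∀ i j, 0 ≤ A i j) (i j : ι) :
    0 ≤ exp A i j :=
  hasSum_le (fun n => mul_nonneg (by positivity) (pow_apply_nonneg hA n i j)) hasSum_zero
    (hasSum_exp_apply A i j)

theorem exp_apply_self_le {A : Matrix ι ι ℝ} (hA : ∀ i j, 0 ≤ A i j) (i : ι) :
    Real.exp (A i i) ≤ exp A i i := by
  have hexp : HasSum (fun n : ℕ => (n ! : ℝ)⁻¹ * A i i ^ n) (Real.exp (A i i)) := by
    simpa [Real.exp_eq_exp_ℝ] using exp_series_hasSum_exp' (𝕂 := ℝ) (A i i)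
  exact hasSum_le (fun n => by gcongr; exact apply_self_pow_le_pow_apply_self hA i n) hexp
    (hasSum_exp_apply A i i)

theorem exp_smul_one (c : ℝ) : exp (c • (1 : Matrix ι ι ℝ)) = Real.exp c • 1 := by
  rw [← Algebra.algebraMap_eq_smul_one, ← Algebra.algebraMap_eq_smul_one, Real.exp_eq_exp_ℝ]
  exact (algebraMap_exp_comm c).symm

theorem exp_eq_exp_neg_smul_exp_add_smul_one (A : Matrix ι ι ℝ) (c : ℝ) :
    exp A = Real.exp (-c) • exp (A + c • 1) := by
  rw [← smul_one_mul, ← exp_smul_one, ← exp_add_of_commute _ _ ((Commute.one_left _).smul_left _),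
    neg_smul, add_comm A, neg_add_cancel_left]

theorem add_smul_one_apply_nonneg {A : Matrix ι ι ℝ} (hA : ∀ i j, i ≠ j → 0 ≤ A i j) (i j : ι) :
    0 ≤ (A + (∑ k, |A k k|) • 1) i j := by
  rcases eq_or_ne i j with rfl | hij
  · have : |A i i| ≤ ∑ k, |A k k| :=
      Finset.single_le_sum (f := fun k => |A k k|) (fun k _ => abs_nonneg _) (Finset.mem_univ i)
    simp only [add_apply, smul_apply, one_apply_eq, smul_eq_mul, mul_one]
    linarith [neg_abs_le (A i i)]
  · simpa [one_apply_ne hij] using hA i j hij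

theorem exp_apply_nonneg_of_offDiag_nonneg {A : Matrix ι ι ℝ} (hA : ∀ i j, i ≠ j → 0 ≤ A i j)
    (i j : ι) : 0 ≤ exp A i j := by
  rw [exp_eq_exp_neg_smul_exp_add_smul_one A (∑ k, |A k k|), smul_apply, smul_eq_mul]
  exact mul_nonneg (Real.exp_pos _).le (exp_apply_nonneg (add_smul_one_apply_nonneg hA) i j)

theorem exp_apply_self_le_of_offDiag_nonneg {A : Matrix ι ι ℝ}
    (hA : ∀ i j, i ≠ j → 0 ≤ A i j) (i : ι) : Real.exp (A i i) ≤ exp A i i := by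
  set c := ∑ k, |A k k|
  rw [exp_eq_exp_neg_smul_exp_add_smul_one A c, smul_apply, smul_eq_mul]
  calc Real.exp (A i i) = Real.exp (-c) * Real.exp ((A + c • 1) i i) := by
        simp [← Real.exp_add]
    _ ≤ Real.exp (-c) * exp (A + c • 1) i i := by
        gcongr; exact exp_apply_self_le (add_smul_one_apply_nonneg hA) i

theorem exp_apply_self_le_exp_mulVec_one {A : Matrix ι ι ℝ}
    (hA : ∀ i j, i ≠ j → 0 ≤ A i j) (i : ι) : Real.exp (A i i) ≤ (exp A *ᵥ 1) i := by
  simp only [mulVec, dotProduct, Pi.one_apply, mul_one]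
  exact (exp_apply_self_le_of_offDiag_nonneg hA i).trans <|
    Finset.single_le_sum (f := fun j => exp A i j)
      (fun j _ => exp_apply_nonneg_of_offDiag_nonneg hA i j) (Finset.mem_univ i)

end Matrix

theorem stmt2_general (l : ℕ) (Λ : Matrix (Fin l) (Fin l) ℝ)
    (hoff : ∀ i j, i ≠ j → 0 ≤ Λ i j)
    (ℓ : Fin l → ℝ)
    (γ : ℝ → Fin l → ℝ)
    (hγ : ∀ t, γ t = (NormedSpace.exp (t • (Λ - Matrix.diagonal ℓ))).mulVec 1) :
    ∀ t, 0 ≤ t → ∀ i,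
      Real.exp ((Λ i i - ℓ i) * t) ≤ γ t i ∧ 0 < Real.exp ((Λ i i - ℓ i) * t) ∧
        0 < γ t i := by
  intro t ht i
  have hoff_t : ∀ j k, j ≠ k → 0 ≤ (t • (Λ - diagonal ℓ)) j k := fun j k hjk => by
    simpa [diagonal_apply_ne _ hjk] using mul_nonneg ht (hoff j k hjk)
  have hdiag_t : (t • (Λ - diagonal ℓ)) i i = (Λ i i - ℓ i) * t := by
    simp [mul_comm]
  have hγi : Real.exp ((Λ i i - ℓ i) * t) ≤ γ t i := by
    rw [hγ, ← hdiag_t]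
    exact exp_apply_self_le_exp_mulVec_one hoff_t i
  exact ⟨hγi, Real.exp_pos _, (Real.exp_pos _).trans_le hγi⟩

/-- For a generator matrix `Λ` and nonnegative `ℓ`,
`γ(t) = exp(t(Λ − D(ℓ)))·𝟏` satisfies `γ_i(t) ≥ e^{(Λ_{ii} − ℓ_i)t} > 0`;
in particular `γ_i(t) > 0`. -/
theorem stmt2 (l : ℕ) (hl : 1 ≤ l) (Λ : Matrix (Fin l) (Fin l) ℝ)
    (hoff : ∀ i j, i ≠ j → 0 ≤ Λ i j) (hrow : ∀ i, ∑ j, Λ i j = 0)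
    (ℓ : Fin l → ℝ) (hℓ : ∀ i, 0 ≤ ℓ i)
    (γ : ℝ → Fin l → ℝ)
    (hγ : ∀ t, γ t = (NormedSpace.exp (t • (Λ - Matrix.diagonal ℓ))).mulVec 1) :
    ∀ t, 0 ≤ t → ∀ i,
      Real.exp ((Λ i i - ℓ i) * t) ≤ γ t i ∧ 0 < Real.exp ((Λ i i - ℓ i) * t) ∧
        0 < γ t i :=
  stmt2_general l Λ hoff ℓ γ hγ
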